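/- For the path graph P_n with vertices 1,…,n, the diffusion state distance DSD_1(1,n) between the two endpoints equals 2k² − 2k + 1 if n = 2k is even, and equals 2k² if n = 2k+1 is odd. -/
import Mathlib

-- assume prior defs: reuse by concatenation later; here re-declare minimal
noncomputable def Dfun (n j : ℕ) : ℝ := if j = 0 ∨ j = n - 1 then 1 else 2
noncomputable def Gfun (n j : ℕ) : ℝ := ((n : ℝ) - 1 - 2 * j) * Dfun n j / 2
lemma Dfun_int (n j : ℕ) (h1 : j ≠ 0) (h2 : j ≠ n - 1) : Dfun n j = 2 := by
  unfold Dfun; simp [h1, h2]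
lemma Gfun_int (n j : ℕ) (h1 : j ≠ 0) (h2 : j ≠ n - 1) :
    Gfun n j = (n : ℝ) - 1 - 2 * j := by
  unfold Gfun; rw [Dfun_int n j h1 h2]; ring
lemma Gfun_zero (n : ℕ) (hn : 2 ≤ n) : Gfun n 0 = ((n : ℝ) - 1) / 2 := by
  unfold Gfun Dfun; simp
lemma Gfun_last (n : ℕ) (hn : 2 ≤ n) : Gfun n (n - 1) = -(((n : ℝ) - 1) / 2) := by
  unfold Gfun Dfun
  have : ((n - 1 : ℕ) : ℝ) = (n : ℝ) - 1 := by
    have : (1:ℕ) ≤ n := by omega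
    push_cast [this]; ring
  simp [this]; ring
lemma gaussR (m : ℕ) : ∑ j ∈ Finset.range m, (j : ℝ) = m * ((m : ℝ) - 1) / 2 := by
  induction m with
  | zero => simp
  | succ m ih => rw [Finset.sum_range_succ, ih]; push_cast; ring
lemma sumAff (m : ℕ) (p q : ℝ) :
    ∑ j ∈ Finset.range m, (p + q * (j : ℝ)) = m * p + q * (m * ((m : ℝ) - 1) / 2) := by
  rw [Finset.sum_add_distrib, Finset.sum_const, ← Finset.mul_sum, gaussR]
  simp [mul_comm]
lemma sum_range_add' (f : ℕ → ℝ) (a b : ℕ) :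
    ∑ j ∈ Finset.range (a + b), f j
      = ∑ j ∈ Finset.range a, f j + ∑ j ∈ Finset.range b, f (a + j) := by
  induction b with
  | zero => simp
  | succ b ih => rw [← Nat.add_assoc, Finset.sum_range_succ, ih, Finset.sum_range_succ, add_assoc]
lemma split_ends (f : ℕ → ℝ) (m : ℕ) :
    ∑ j ∈ Finset.range (m + 2), f j
      = f 0 + (∑ j ∈ Finset.range m, f (j + 1)) + f (m + 1) := by
  rw [Finset.sum_range_succ, Finset.sum_range_succ']; ring


lemma sumAbsG_even (K : ℕ) :
    ∑ j ∈ Finset.range (2 * (K + 1)), |Gfun (2 * (K + 1)) j|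
      = 2 * ((K : ℝ) + 1) ^ 2 - 2 * ((K : ℝ) + 1) + 1 := by
  have hn : 2 * (K + 1) = 2 * K + 2 := by ring
  rw [hn, split_ends]
  have h0 : |Gfun (2*K+2) 0| = ((2*K+2 : ℝ) - 1) / 2 := by
    rw [Gfun_zero _ (by omega)]
    rw [abs_of_nonneg (by push_cast; linarith [Nat.cast_nonneg (α := ℝ) K])]
    push_cast; ring
  have hl : |Gfun (2*K+2) (2*K+1)| = ((2*K+2 : ℝ) - 1) / 2 := by
    have := Gfun_last (2*K+2) (by omega)
    simp only [show 2*K+2-1 = 2*K+1 from rfl] at this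
    rw [this, abs_neg, abs_of_nonneg (by push_cast; linarith [Nat.cast_nonneg (α := ℝ) K])]
    push_cast; ring
  have hint : ∀ j, j < 2*K → |Gfun (2*K+2) (j+1)| = |(2*(K:ℝ) - 1) - 2*j| := by
    intro j hj
    rw [Gfun_int _ _ (by omega) (by omega)]
    congr 1; push_cast; ring
  have hsplit : ∑ j ∈ Finset.range (2*K), |Gfun (2*K+2) (j+1)| = 2 * (K:ℝ)^2 := by
    have h2K : 2*K = K + K := by ring
    rw [Finset.sum_congr rfl (fun j hj => hint j (Finset.mem_range.mp hj)), h2K,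
      sum_range_add' (fun j => |(2*(K:ℝ) - 1) - 2*j|) K K]
    have hA : ∀ j ∈ Finset.range K, |(2*(K:ℝ) - 1) - 2*j| = (2*(K:ℝ) - 1) + (-2) * j := by
      intro j hj
      have hj' : (j:ℝ) ≤ (K:ℝ) - 1 := by
        have := Finset.mem_range.mp hj
        have : (j:ℝ) + 1 ≤ (K:ℝ) := by exact_mod_cast this
        linarith
      rw [abs_of_nonneg (by linarith)]; ring
    have hB : ∀ j ∈ Finset.range K, |(2*(K:ℝ) - 1) - 2*(K + j : ℕ)| = 1 + 2 * (j:ℝ) := by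
      intro j hj
      have : ((K + j : ℕ) : ℝ) = (K:ℝ) + j := by push_cast; ring
      rw [this, abs_of_nonpos (by nlinarith [Nat.cast_nonneg (α := ℝ) j])]
      ring
    rw [Finset.sum_congr rfl hA, Finset.sum_congr rfl hB, sumAff, sumAff]
    push_cast; ring
  rw [h0, hl, hsplit]
  push_cast; ring

lemma sumAbsG_odd (K : ℕ) :
    ∑ j ∈ Finset.range (2 * (K + 1) + 1), |Gfun (2 * (K + 1) + 1) j|
      = 2 * ((K : ℝ) + 1) ^ 2 := by
  have hn : 2 * (K + 1) + 1 = (2 * K + 1) + 2 := by ring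
  rw [hn, split_ends]
  have h0 : |Gfun (2*K+1+2) 0| = (K:ℝ) + 1 := by
    rw [Gfun_zero _ (by omega), abs_of_nonneg (by push_cast; linarith [Nat.cast_nonneg (α := ℝ) K])]
    push_cast; ring
  have hl : |Gfun (2*K+1+2) (2*K+2)| = (K:ℝ) + 1 := by
    have := Gfun_last (2*K+1+2) (by omega)
    simp only [show 2*K+1+2-1 = 2*K+2 from rfl] at this
    rw [this, abs_neg, abs_of_nonneg (by push_cast; linarith [Nat.cast_nonneg (α := ℝ) K])]
    push_cast; ring
  have hint : ∀ j, j < 2*K+1 → |Gfun (2*K+1+2) (j+1)| = |2*(K:ℝ) - 2*j| := by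
    intro j hj
    rw [Gfun_int _ _ (by omega) (by omega)]
    congr 1; push_cast; ring
  have hsplit : ∑ j ∈ Finset.range (2*K+1), |Gfun (2*K+1+2) (j+1)|
      = 2 * (K:ℝ)^2 + 2*K := by
    have h2K : 2*K+1 = (K+1) + K := by ring
    rw [Finset.sum_congr rfl (fun j hj => hint j (Finset.mem_range.mp hj)), h2K,
      sum_range_add' (fun j => |2*(K:ℝ) - 2*j|) (K+1) K]
    have hA : ∀ j ∈ Finset.range (K+1), |2*(K:ℝ) - 2*j| = 2*(K:ℝ) + (-2) * j := by
      intro j hj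
      have hj' : (j:ℝ) ≤ (K:ℝ) := by
        have := Finset.mem_range.mp hj
        exact_mod_cast Nat.lt_succ_iff.mp this
      rw [abs_of_nonneg (by linarith)]; ring
    have hB : ∀ j ∈ Finset.range K, |2*(K:ℝ) - 2*((K+1) + j : ℕ)| = 2 + 2 * (j:ℝ) := by
      intro j hj
      have : (((K+1) + j : ℕ) : ℝ) = (K:ℝ) + 1 + j := by push_cast; ring
      rw [this, abs_of_nonpos (by nlinarith [Nat.cast_nonneg (α := ℝ) j])]
      ring
    rw [Finset.sum_congr rfl hA, Finset.sum_congr rfl hB, sumAff, sumAff]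
    push_cast; ring
  rw [h0, hl, hsplit]
  push_cast; ring

lemma Dfun_pos (n j : ℕ) : 0 < Dfun n j := by
  unfold Dfun; split <;> norm_num
lemma Dfun_ne_zero (n j : ℕ) : Dfun n j ≠ 0 := (Dfun_pos n j).ne'
lemma sumD (n : ℕ) (hn : 2 ≤ n) : ∑ j ∈ Finset.range n, Dfun n j = 2 * (n : ℝ) - 2 := by
  obtain ⟨m, rfl⟩ : ∃ m, n = m + 2 := ⟨n - 2, by omega⟩
  rw [split_ends]
  have h0 : Dfun (m+2) 0 = 1 := by unfold Dfun; simp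
  have hl : Dfun (m+2) (m+1) = 1 := by unfold Dfun; simp
  have hint : ∀ j ∈ Finset.range m, Dfun (m+2) (j+1) = 2 := by
    intro j hj
    exact Dfun_int _ _ (by omega) (by simp at hj; omega)
  rw [h0, hl, Finset.sum_congr rfl hint, Finset.sum_const]
  simp; push_cast; ring
lemma sumG (n : ℕ) (hn : 2 ≤ n) : ∑ j ∈ Finset.range n, Gfun n j = 0 := by
  obtain ⟨m, rfl⟩ : ∃ m, n = m + 2 := ⟨n - 2, by omega⟩
  rw [split_ends]
  have h0 := Gfun_zero (m+2) (by omega)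
  have hl := Gfun_last (m+2) (by omega)
  simp only [show m + 2 - 1 = m + 1 from rfl] at hl
  have hint : ∀ j ∈ Finset.range m, Gfun (m+2) (j+1) = ((m:ℝ) - 1) + (-2) * j := by
    intro j hj
    rw [Gfun_int _ _ (by omega) (by simp at hj; omega)]
    push_cast; ring
  rw [h0, hl, Finset.sum_congr rfl hint, sumAff]
  push_cast; ring




/-- The adjacency relation of the path graph is decidable. -/
instance pathGraphAdjDecidable (n : ℕ) : DecidableRel (SimpleGraph.pathGraph n).Adj :=
  fun _ _ => decidable_of_iff _ SimpleGraph.pathGraph_adj.symm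

/-- For the path `P_n`, the diffusion state distance `DSD_1(1,n)` between
the two endpoints equals `2k² − 2k + 1` if `n = 2k` and `2k²` if `n = 2k + 1`. -/
theorem dsd_one_path_endpoints
    (n : ℕ) (hn : 2 ≤ n)
    (d : Fin n → ℝ) (hd : ∀ i, d i = if (i : ℕ) = 0 ∨ (i : ℕ) = n - 1 then 1 else 2)
    (𝔾 : Matrix (Fin n) (Fin n) ℝ)
    (hG1 : ∀ x y : Fin n,
      (𝔾 * (1 - (Matrix.diagonal fun i => (d i)⁻¹) * (SimpleGraph.pathGraph n).adjMatrix ℝ)) x y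
        = (if x = y then (1 : ℝ) else 0) - d y / (2 * ((n : ℝ) - 1)))
    (hG2 : ∀ x : Fin n, ∑ y, 𝔾 x y = 0)
    (k : ℕ) :
    (n = 2 * k →
      ∑ j, |𝔾 (⟨0, by omega⟩ : Fin n) j - 𝔾 (⟨n - 1, by omega⟩ : Fin n) j|
        = 2 * (k : ℝ) ^ 2 - 2 * (k : ℝ) + 1)
    ∧ (n = 2 * k + 1 →
      ∑ j, |𝔾 (⟨0, by omega⟩ : Fin n) j - 𝔾 (⟨n - 1, by omega⟩ : Fin n) j|
        = 2 * (k : ℝ) ^ 2) := by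
  have h0n : 0 < n := by omega
  have hln : n - 1 < n := by omega
  set A : Matrix (Fin n) (Fin n) ℝ := (SimpleGraph.pathGraph n).adjMatrix ℝ with hA
  set F : Fin n → ℝ := fun y => 𝔾 ⟨0, h0n⟩ y - 𝔾 ⟨n-1, hln⟩ y with hF
  set FF : ℕ → ℝ := fun j => if h : j < n then F ⟨j, h⟩ else 0 with hFF
  have expand : ∀ x y : Fin n,
      𝔾 x y - ∑ z, 𝔾 x z * ((d z)⁻¹ * A z y)
        = (if x = y then (1:ℝ) else 0) - d y / (2 * ((n:ℝ) - 1)) := by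
    intro x y
    have h := hG1 x y
    rw [Matrix.mul_sub, Matrix.mul_one, Matrix.sub_apply, Matrix.mul_apply] at h
    simpa [Matrix.diagonal_mul] using h
  have eqnF : ∀ y : Fin n,
      F y - ∑ z, F z * ((d z)⁻¹ * A z y)
        = (if (⟨0,h0n⟩ : Fin n) = y then (1:ℝ) else 0)
            - (if (⟨n-1,hln⟩ : Fin n) = y then 1 else 0) := by
    intro y
    have h1 := expand ⟨0,h0n⟩ y
    have h2 := expand ⟨n-1,hln⟩ y
    have h3 : ∑ z, F z * ((d z)⁻¹ * A z y)
        = (∑ z, 𝔾 ⟨0,h0n⟩ z * ((d z)⁻¹ * A z y))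
            - ∑ z, 𝔾 ⟨n-1,hln⟩ z * ((d z)⁻¹ * A z y) := by
      rw [← Finset.sum_sub_distrib]
      exact Finset.sum_congr rfl fun z _ => (sub_mul _ _ _)
    simp only [hF]
    rw [h3]; linarith
  have adj_eq : ∀ z y : Fin n, A z y
      = (if (z:ℕ)+1 = (y:ℕ) then (1:ℝ) else 0) + (if (y:ℕ)+1 = (z:ℕ) then 1 else 0) := by
    intro z y
    by_cases h1 : (z:ℕ)+1 = (y:ℕ) <;> by_cases h2 : (y:ℕ)+1 = (z:ℕ) <;>
      simp [hA, SimpleGraph.adjMatrix_apply, SimpleGraph.pathGraph_adj, h1, h2] <;> omega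
  have sum_ite : ∀ (g : Fin n → ℝ) (m : ℕ) (hm : m < n),
      (∑ z : Fin n, if (z:ℕ) = m then g z else 0) = g ⟨m, hm⟩ := by
    intro g m hm
    have hiff : ∀ z : Fin n, ((z:ℕ) = m) ↔ (z = (⟨m, hm⟩ : Fin n)) :=
      fun z => ⟨fun h => Fin.ext h, fun h => by rw [h]⟩
    simp only [hiff]
    rw [Finset.sum_ite_eq' Finset.univ (⟨m, hm⟩ : Fin n) g]
    simp
  have sumNbr : ∀ (j : ℕ) (hj : j < n),
      ∑ z, F z * ((d z)⁻¹ * A z ⟨j,hj⟩)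
        = (if j = 0 then 0 else FF (j-1) * (Dfun n (j-1))⁻¹)
            + FF (j+1) * (Dfun n (j+1))⁻¹ := by
    intro j hj
    have hsplit : ∀ z : Fin n, F z * ((d z)⁻¹ * A z ⟨j,hj⟩)
        = (if (z:ℕ)+1 = j then F z * (d z)⁻¹ else 0)
            + (if j+1 = (z:ℕ) then F z * (d z)⁻¹ else 0) := by
      intro z
      rw [adj_eq]
      by_cases h1 : (z:ℕ)+1 = j <;> by_cases h2 : j+1 = (z:ℕ) <;>
        simp [h1, h2] <;> ring
    rw [Finset.sum_congr rfl fun z _ => hsplit z, Finset.sum_add_distrib]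
    congr 1
    · by_cases hj0 : j = 0
      · subst hj0
        rw [if_pos rfl]
        exact Finset.sum_eq_zero fun z _ => if_neg (by omega)
      · rw [if_neg hj0]
        rw [Finset.sum_congr rfl (fun (z : Fin n) _ =>
          if_congr (show ((z:ℕ)+1 = j) ↔ ((z:ℕ) = j-1) by omega) rfl rfl),
          sum_ite _ (j-1) (by omega)]
        simp only [hFF]
        rw [dif_pos (show j-1 < n by omega), hd]
        simp [Dfun]
    · by_cases hj1 : j+1 < n
      · rw [Finset.sum_congr rfl (fun (z : Fin n) _ =>
          if_congr (show (j+1 = (z:ℕ)) ↔ ((z:ℕ) = j+1) from eq_comm) rfl rfl),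
          sum_ite _ (j+1) hj1]
        simp only [hFF]
        rw [dif_pos hj1, hd]
        simp [Dfun]
      · have hz : ∀ z : Fin n, ¬ (j+1 = (z:ℕ)) := by
          intro z h; have := z.isLt; omega
        rw [Finset.sum_eq_zero fun z _ => if_neg (hz z)]
        simp only [hFF]
        rw [dif_neg hj1]
        ring
  have E : ∀ (j : ℕ) (hj : j < n),
      FF j - ((if j = 0 then 0 else FF (j-1) * (Dfun n (j-1))⁻¹)
          + FF (j+1) * (Dfun n (j+1))⁻¹)
        = (if 0 = j then (1:ℝ) else 0) - (if n-1 = j then 1 else 0) := by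
    intro j hj
    have h := eqnF ⟨j,hj⟩
    rw [sumNbr j hj] at h
    simp only [Fin.mk.injEq] at h
    simp only [hFF]
    rw [dif_pos hj]
    exact h
  set c : ℝ := FF 0 - Gfun n 0 with hc
  have main2 : ∀ j : ℕ, (∀ hj : j < n, FF j = c * Dfun n j + Gfun n j)
      ∧ (∀ hj : j + 1 < n, FF (j+1) = c * Dfun n (j+1) + Gfun n (j+1)) := by
    intro j
    induction j with
    | zero =>
      constructor
      · intro hj
        have hD : Dfun n 0 = 1 := by simp [Dfun]
        rw [hD, hc]; ring
      · intro hj1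
        have h := E 0 h0n
        rw [if_pos rfl, if_pos rfl, if_neg (show ¬ (n-1 = 0) by omega)] at h
        -- h : FF 0 - (0 + FF 1 * (Dfun n 1)⁻¹) = 1 - 0
        have hD1 := Dfun_ne_zero n 1
        have hsolve : FF 1 = Dfun n 1 * (FF 0 - 1) := by
          field_simp at h
          linarith
        rw [hsolve, hc, Gfun_zero n hn]
        unfold Gfun
        field_simp
        ring
    | succ j ih =>
      refine ⟨ih.2, ?_⟩
      intro hj2
      have h := E (j+1) (by omega)
      rw [if_neg (show ¬ (j+1 = 0) by omega),
        if_neg (show ¬ (0 = j+1) by omega),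
        if_neg (show ¬ (n-1 = j+1) by omega)] at h
      have hD0 := Dfun_ne_zero n j
      have hD2 := Dfun_ne_zero n (j+2)
      have hFj := ih.1 (by omega)
      have hFj1 := ih.2 (by omega)
      have hD1 : Dfun n (j+1) = 2 := Dfun_int n (j+1) (by omega) (by omega)
      have hsolve : FF (j+1+1) = Dfun n (j+2) * (FF (j+1) - FF j * (Dfun n j)⁻¹) := by
        have h2 : FF (j+1+1) * (Dfun n (j+1+1))⁻¹ = FF (j+1) - FF j * (Dfun n j)⁻¹ := by
          simp only [show j+1-1 = j from rfl] at h
          linarith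
        have : FF (j+1+1) = (FF (j+1+1) * (Dfun n (j+1+1))⁻¹) * Dfun n (j+1+1) := by
          field_simp
        rw [this, h2]; ring_nf
      rw [hsolve, hFj, hFj1, hD1]
      unfold Gfun
      rw [hD1]
      field_simp
      push_cast
      ring
  have hFsum : ∑ j ∈ Finset.range n, FF j = 0 := by
    have hsum : ∑ y : Fin n, F y = 0 := by
      simp only [hF]
      rw [Finset.sum_sub_distrib, hG2 ⟨0,h0n⟩, hG2 ⟨n-1,hln⟩]
      ring
    rw [← Fin.sum_univ_eq_sum_range (fun j => FF j) n, ← hsum]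
    refine Finset.sum_congr rfl fun y _ => ?_
    simp only [hFF]
    rw [dif_pos y.isLt]
  have hc0 : c = 0 := by
    have hval : ∑ j ∈ Finset.range n, FF j = c * (2*(n:ℝ)-2) := by
      rw [Finset.sum_congr rfl (fun j hj => (main2 j).1 (Finset.mem_range.mp hj)),
        Finset.sum_add_distrib, ← Finset.mul_sum, sumD n hn, sumG n hn]
      ring
    rw [hFsum] at hval
    have hne : (2*(n:ℝ)-2) ≠ 0 := by
      have : (2:ℝ) ≤ (n:ℝ) := by exact_mod_cast hn
      nlinarith
    rcases mul_eq_zero.mp hval.symm with h | h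
    · exact h
    · exact absurd h hne
  have key : ∑ j, |𝔾 (⟨0, h0n⟩ : Fin n) j - 𝔾 (⟨n-1, hln⟩ : Fin n) j|
      = ∑ j ∈ Finset.range n, |Gfun n j| := by
    rw [← Fin.sum_univ_eq_sum_range (fun j => |Gfun n j|) n]
    refine Finset.sum_congr rfl fun y _ => ?_
    have h2 : FF y.val = Gfun n y.val := by
      rw [(main2 y.val).1 y.isLt, hc0]; ring
    simp only [hFF] at h2
    rw [dif_pos y.isLt] at h2
    simp only [hF, Fin.eta] at h2
    rw [h2]
  constructor
  · intro hnk
    obtain ⟨K, rfl⟩ : ∃ K, k = K + 1 := ⟨k - 1, by omega⟩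
    refine key.trans ?_
    subst hnk
    rw [sumAbsG_even K]
    push_cast
    ring
  · intro hnk
    obtain ⟨K, rfl⟩ : ∃ K, k = K + 1 := ⟨k - 1, by omega⟩
    refine key.trans ?_
    subst hnk
    rw [sumAbsG_odd K]
    push_cast
    ring
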